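/- Let Γ be a finitely generated group with finite symmetric generating set Q. (a) If Z is a uniformly recurrent subgroup of Γ and H ∈ Z, then for every x ∈ Γ/H and every R > 0 there exists S > 0 such that for every y ∈ Γ/H there is z ∈ Γ/H with d(y,z) ≤ S and the rooted-labeled R-balls around x and around z isomorphic. (b) Conversely, if a subgroup H ≤ Γ has this repetition property (for every x ∈ Γ/H and R > 0 there is S > 0 such that every S-ball in Γ/H contains a point z whose rooted-labeled R-ball is isomorphic to that of x), then the closure of the conjugation orbit {gHg⁻¹ : g ∈ Γ} in Sub(Γ) is a uniformly recurrent subgroup. -/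

import Mathlib

/-- Conjugation action of a group on its subgroups: `g • H = gHg⁻¹`. -/
def conjSub {Γ : Type*} [Group Γ] (g : Γ) (H : Subgroup Γ) : Subgroup Γ :=
  Subgroup.map (MulAut.conj g).toMonoidHom H

/-- The Chabauty-type topology on `Sub(Γ)`: the topology induced from the product
topology on `{0,1}^Γ` via `H ↦ (γ ↦ decide (γ ∈ H))`. -/
noncomputable instance chabauty {Γ : Type*} [Group Γ] : TopologicalSpace (Subgroup Γ) :=
  TopologicalSpace.induced
    (fun H (g : Γ) => @decide (g ∈ H) (Classical.dec _)) inferInstance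

/-- A uniformly recurrent subgroup: a nonempty, closed, conjugation-invariant subset of
`Sub(Γ)` on which every conjugation orbit is dense. -/
structure IsURS {Γ : Type*} [Group Γ] (Z : Set (Subgroup Γ)) : Prop where
  nonempty : Z.Nonempty
  closed : IsClosed Z
  invariant : ∀ g : Γ, ∀ H ∈ Z, conjSub g H ∈ Z
  minimal : ∀ H ∈ Z, ∀ K ∈ Z, K ∈ closure {L : Subgroup Γ | ∃ g : Γ, conjSub g H = L}

/-- The Schreier graph of a subgroup `H ≤ Γ` with respect to a generating set `Q`:
vertices are left cosets in `Γ/H`, and `x ~ y` iff some `s ∈ Q` moves one to the other. -/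
def schreierGraph {Γ : Type*} [Group Γ] (Q : Finset Γ) (H : Subgroup Γ) :
    SimpleGraph (Γ ⧸ H) where
  Adj x y := x ≠ y ∧ ∃ s ∈ Q, s • x = y ∨ s • y = x
  symm := by
    constructor
    rintro x y ⟨hne, s, hs, h⟩
    exact ⟨hne.symm, s, hs, h.symm⟩
  loopless := by constructor; rintro x ⟨hne, _⟩; exact hne rfl

/-- The `R`-ball around `x` in the Schreier graph of `H`. -/
def sBall {Γ : Type*} [Group Γ] (Q : Finset Γ) (H : Subgroup Γ) (R : ℕ) (x : Γ ⧸ H) :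
    Set (Γ ⧸ H) :=
  {y | (schreierGraph Q H).Reachable x y ∧ (schreierGraph Q H).dist x y ≤ R}

/-- The rooted-labeled `R`-balls around `x ∈ Γ/H` and `y ∈ Γ/H'` are isomorphic:
there is a root-preserving bijection between them commuting with all generator labels. -/
def BallIso {Γ : Type*} [Group Γ] (Q : Finset Γ) (H H' : Subgroup Γ) (R : ℕ)
    (x : Γ ⧸ H) (y : Γ ⧸ H') : Prop :=
  ∃ φ : (Γ ⧸ H) → (Γ ⧸ H'),
    Set.BijOn φ (sBall Q H R x) (sBall Q H' R y) ∧ φ x = y ∧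
    ∀ s ∈ Q, ∀ u ∈ sBall Q H R x, ∀ v ∈ sBall Q H R x, (s • u = v ↔ s • φ u = φ v)

/-- The repetition property of a subgroup `H`: every pattern (`R`-ball) occurring around
some `x ∈ Γ/H` occurs within uniformly bounded distance of every vertex of `Γ/H`. -/
def RepetitionProperty {Γ : Type*} [Group Γ] (Q : Finset Γ) (H : Subgroup Γ) : Prop :=
  ∀ x : Γ ⧸ H, ∀ R : ℕ, 0 < R → ∃ S : ℕ, 0 < S ∧
    ∀ y : Γ ⧸ H, ∃ z ∈ sBall Q H S y, BallIso Q H H R x z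


/-!
Everything is read off stabilizers: the stabilizer of `g • x` is the conjugate by `g` of that
of `x`, so the conjugation orbit of `H` is the set of stabilizers of points of `Γ/H`, and a
basic neighbourhood of a subgroup in `Sub(Γ)` prescribes which words of bounded length it
contains. Rooted labeled `R`-balls around `x` and `z` are isomorphic as soon as the
stabilizers of `x` and `z` contain the same words of length `≤ 2R + 1`, and such an
isomorphism forces them to contain the same words of length `≤ R`. So patterns around points
of `Γ/H` are neighbourhoods of stabilizers. For (a), minimality and compactness of `Z` give
finitely many `g` such that every member of `Z` is conjugated by one of them into a given
neighbourhood; their word lengths bound `S`. For (b), given `K` and `L` in the orbit closure,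
`L` is close to the stabilizer of some `x` and `K` to that of some `y`; the pattern around `x`
recurs at some `v • y` near `y`, so `L` is close to the conjugate of `K` by `v`.
-/

open scoped Pointwise

section WordBall

variable {Γ : Type*} [Group Γ] {S : Set Γ} {m n : ℕ}

def wordBall (S : Set Γ) (n : ℕ) : Set Γ :=
  insert 1 (S ∪ S⁻¹) ^ n

lemma one_mem_wordBall : (1 : Γ) ∈ wordBall S n :=
  Set.one_mem_pow (Set.mem_insert 1 _)

lemma wordBall_mono (h : m ≤ n) : wordBall S m ⊆ wordBall S n :=
  Set.pow_subset_pow_right (Set.mem_insert 1 _) h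

lemma mul_mem_wordBall {a b : Γ} (ha : a ∈ wordBall S m) (hb : b ∈ wordBall S n) :
    a * b ∈ wordBall S (m + n) := by
  rw [wordBall, pow_add]
  exact Set.mul_mem_mul ha hb

lemma inv_wordBall : (wordBall S n)⁻¹ = wordBall S n := by
  rw [wordBall, ← inv_pow, Set.inv_insert, inv_one, Set.union_inv, inv_inv, Set.union_comm]

lemma inv_mem_wordBall {a : Γ} (ha : a ∈ wordBall S n) : a⁻¹ ∈ wordBall S n := by
  rwa [← Set.mem_inv, inv_wordBall]

lemma conj_mem_wordBall {a b : Γ} (ha : a ∈ wordBall S m) (hb : b ∈ wordBall S n) :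
    a⁻¹ * b * a ∈ wordBall S (m + n + m) :=
  mul_mem_wordBall (mul_mem_wordBall (inv_mem_wordBall ha) hb) ha

lemma finite_wordBall (hS : S.Finite) : ∀ n, (wordBall S n).Finite
  | 0 => by simp [wordBall]
  | n + 1 => by
    rw [wordBall, pow_succ]
    exact (finite_wordBall hS n).mul ((hS.union hS.inv).insert 1)

lemma exists_mem_wordBall (hgen : Subgroup.closure S = ⊤) (g : Γ) :
    ∃ n, g ∈ wordBall S n := by
  induction hgen ▸ Subgroup.mem_top g using Subgroup.closure_induction with
  | mem s hs => exact ⟨1, by simp [wordBall, hs]⟩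
  | one => exact ⟨0, one_mem_wordBall⟩
  | mul a b _ _ ha hb =>
    obtain ⟨m, ha⟩ := ha
    obtain ⟨n, hb⟩ := hb
    exact ⟨m + n, mul_mem_wordBall ha hb⟩
  | inv a _ ha =>
    obtain ⟨n, ha⟩ := ha
    exact ⟨n, inv_mem_wordBall ha⟩

lemma exists_subset_wordBall (hgen : Subgroup.closure S = ⊤) {W : Set Γ}
    (hW : W.Finite) : ∃ n, W ⊆ wordBall S n := by
  choose len hlen using exists_mem_wordBall hgen
  refine ⟨hW.toFinset.sup len, fun g hg => wordBall_mono ?_ (hlen g)⟩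
  exact Finset.le_sup (hW.mem_toFinset.mpr hg)

end WordBall

section SchreierGraph

variable {Γ : Type*} [Group Γ] {Q : Finset Γ} {H : Subgroup Γ}

lemma exists_mem_wordBall_one_of_adj {u v : Γ ⧸ H} (h : (schreierGraph Q H).Adj u v) :
    ∃ t ∈ wordBall (Q : Set Γ) 1, t • u = v := by
  obtain ⟨-, s, hs, hsu | hsv⟩ := h
  · exact ⟨s, by simp [wordBall, hs], hsu⟩
  · exact ⟨s⁻¹, by simp [wordBall, hs], by rw [← hsv, inv_smul_smul]⟩

lemma eq_or_adj_smul_of_mem_wordBall_one {t : Γ} (ht : t ∈ wordBall (Q : Set Γ) 1)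
    (u : Γ ⧸ H) :
    t • u = u ∨ (schreierGraph Q H).Adj u (t • u) := by
  refine or_iff_not_imp_left.mpr fun hne => ⟨Ne.symm hne, ?_⟩
  simp only [wordBall, pow_one, Set.mem_insert_iff, Set.mem_union, Finset.mem_coe,
    Set.mem_inv] at ht
  rcases ht with rfl | hs | hs
  · exact absurd (one_smul Γ u) hne
  · exact ⟨t, hs, Or.inl rfl⟩
  · exact ⟨t⁻¹, hs, Or.inr (inv_smul_smul t u)⟩

lemma exists_mem_wordBall_of_walk {u v : Γ ⧸ H} (p : (schreierGraph Q H).Walk u v) :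
    ∃ w ∈ wordBall (Q : Set Γ) p.length, w • u = v := by
  induction p with
  | nil => exact ⟨1, one_mem_wordBall, one_smul Γ _⟩
  | cons hadj _ ih =>
    obtain ⟨t, ht, rfl⟩ := exists_mem_wordBall_one_of_adj hadj
    obtain ⟨w, hw, rfl⟩ := ih
    exact ⟨w * t, mul_mem_wordBall hw ht, mul_smul w t _⟩

lemma exists_walk_of_mem_wordBall {w : Γ} {n : ℕ} (hw : w ∈ wordBall (Q : Set Γ) n)
    (u : Γ ⧸ H) :
    ∃ p : (schreierGraph Q H).Walk u (w • u), p.length ≤ n := by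
  induction n generalizing w u with
  | zero =>
    obtain rfl : w = 1 := by simpa [wordBall] using hw
    exact ⟨(SimpleGraph.Walk.nil).copy rfl (one_smul Γ u).symm, by simp⟩
  | succ n ih =>
    rw [wordBall, pow_succ] at hw
    obtain ⟨w', hw', t, ht, rfl⟩ := hw
    obtain ⟨p, hp⟩ := ih hw' (t • u)
    rw [mul_smul]
    rcases eq_or_adj_smul_of_mem_wordBall_one (by rwa [wordBall, pow_one]) u with htu | hadj
    · exact ⟨p.copy htu (by rw [htu]), by simpa using hp.trans n.le_succ⟩
    · exact ⟨.cons hadj p, by simpa using hp⟩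

lemma mem_sBall_iff {R : ℕ} {x y : Γ ⧸ H} :
    y ∈ sBall Q H R x ↔ ∃ w ∈ wordBall (Q : Set Γ) R, w • x = y := by
  constructor
  · rintro ⟨hreach, hdist⟩
    obtain ⟨p, hp⟩ := hreach.exists_walk_length_eq_dist
    obtain ⟨w, hw, hwx⟩ := exists_mem_wordBall_of_walk p
    exact ⟨w, wordBall_mono (hp ▸ hdist) hw, hwx⟩
  · rintro ⟨w, hw, rfl⟩
    obtain ⟨p, hp⟩ := exists_walk_of_mem_wordBall hw x
    exact ⟨p.reachable, (SimpleGraph.dist_le p).trans hp⟩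

lemma smul_mem_sBall {R : ℕ} {w : Γ} (hw : w ∈ wordBall (Q : Set Γ) R) (x : Γ ⧸ H) :
    w • x ∈ sBall Q H R x :=
  mem_sBall_iff.mpr ⟨w, hw, rfl⟩

end SchreierGraph

section AgreeOn

variable {Γ : Type*} [Group Γ] {W W' : Set Γ} {K L M : Subgroup Γ}

def AgreeOn (W : Set Γ) (K L : Subgroup Γ) : Prop :=
  ∀ w ∈ W, w ∈ K ↔ w ∈ L

lemma AgreeOn.symm (h : AgreeOn W K L) : AgreeOn W L K :=
  fun w hw => (h w hw).symm

lemma AgreeOn.trans (h : AgreeOn W K L) (h' : AgreeOn W L M) : AgreeOn W K M :=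
  fun w hw => (h w hw).trans (h' w hw)

lemma AgreeOn.mono (h : AgreeOn W K L) (hW : W' ⊆ W) : AgreeOn W' K L :=
  fun w hw => h w (hW hw)

lemma mem_conjSub {g w : Γ} : w ∈ conjSub g K ↔ g⁻¹ * w * g ∈ K := by
  rw [conjSub, Subgroup.mem_map_equiv, MulAut.conj_symm_apply]

lemma AgreeOn.conjSub (h : AgreeOn W K L) (g : Γ) (hW : ∀ w ∈ W', g⁻¹ * w * g ∈ W) :
    AgreeOn W' (conjSub g K) (conjSub g L) :=
  fun w hw => by rw [mem_conjSub, mem_conjSub]; exact h _ (hW w hw)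

end AgreeOn

section Stabilizer

open MulAction

variable {Γ : Type*} [Group Γ]

lemma stabilizer_smul_eq_conjSub {X : Type*} [MulAction Γ X] (g : Γ) (x : X) :
    stabilizer Γ (g • x) = conjSub g (stabilizer Γ x) :=
  stabilizer_smul_eq_stabilizer_map_conj g x

def conjOrbit (H : Subgroup Γ) : Set (Subgroup Γ) :=
  {K | ∃ g : Γ, conjSub g H = K}

lemma stabilizer_coe_eq_conjSub (H : Subgroup Γ) (g : Γ) :
    stabilizer Γ (g : Γ ⧸ H) = conjSub g H := by
  simpa using stabilizer_smul_eq_conjSub g ((1 : Γ) : Γ ⧸ H)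

lemma conjOrbit_eq_range_stabilizer (H : Subgroup Γ) :
    conjOrbit H = Set.range (stabilizer Γ : Γ ⧸ H → Subgroup Γ) := by
  rw [← QuotientGroup.mk_surjective.range_comp]
  exact congrArg Set.range (funext fun g => (stabilizer_coe_eq_conjSub H g).symm)

lemma smul_eq_smul_iff_of_agreeOn {X Y : Type*} [MulAction Γ X] [MulAction Γ Y] {x : X} {y : Y}
    {W : Set Γ} (h : AgreeOn W (stabilizer Γ x) (stabilizer Γ y)) {v w : Γ}
    (hvw : w⁻¹ * v ∈ W) : v • x = w • x ↔ v • y = w • y := by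
  have := h _ hvw
  rwa [mem_stabilizer_iff, mem_stabilizer_iff, mul_smul, mul_smul, inv_smul_eq_iff,
    inv_smul_eq_iff] at this

end Stabilizer

section BallIso

open MulAction

variable {Γ : Type*} [Group Γ] {Q : Finset Γ} {H H' : Subgroup Γ} {R : ℕ}
  {x : Γ ⧸ H} {y : Γ ⧸ H'}

/-- The isomorphism is `w • x ↦ w • y`: two words of length `≤ R`, or one of them preceded
by a generator, differ by a word of length `≤ 2R + 1`. -/
lemma ballIso_of_agreeOn
    (h : AgreeOn (wordBall (Q : Set Γ) (2 * R + 1)) (stabilizer Γ x) (stabilizer Γ y)) :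
    BallIso Q H H' R x y := by
  have transfer {v w : Γ} (hv : v ∈ wordBall (Q : Set Γ) (R + 1))
      (hw : w ∈ wordBall (Q : Set Γ) R) : v • x = w • x ↔ v • y = w • y :=
    smul_eq_smul_iff_of_agreeOn h
      (wordBall_mono (by omega) (mul_mem_wordBall (inv_mem_wordBall hw) hv))
  let φ : Γ ⧸ H → Γ ⧸ H' := fun u =>
    (Classical.epsilon fun w => w ∈ wordBall (Q : Set Γ) R ∧ w • x = u) • y
  have hφ {w : Γ} (hw : w ∈ wordBall (Q : Set Γ) R) : φ (w • x) = w • y := by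
    obtain ⟨hw', hw'x⟩ :=
      Classical.epsilon_spec (p := fun v => _ ∧ v • x = w • x) ⟨w, hw, rfl⟩
    exact (transfer (wordBall_mono R.le_succ hw') hw).mp hw'x
  refine ⟨φ, ⟨?_, ?_, ?_⟩, ?_, ?_⟩
  · intro u hu
    obtain ⟨w, hw, rfl⟩ := mem_sBall_iff.mp hu
    rw [hφ hw]
    exact smul_mem_sBall hw y
  · intro u hu u' hu' huu'
    obtain ⟨v, hv, rfl⟩ := mem_sBall_iff.mp hu
    obtain ⟨w, hw, rfl⟩ := mem_sBall_iff.mp hu'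
    rw [hφ hv, hφ hw] at huu'
    exact (transfer (wordBall_mono R.le_succ hv) hw).mpr huu'
  · intro u hu
    obtain ⟨w, hw, rfl⟩ := mem_sBall_iff.mp hu
    exact ⟨w • x, smul_mem_sBall hw x, hφ hw⟩
  · simpa using hφ (one_mem_wordBall (S := (Q : Set Γ)))
  · intro s hs u hu u' hu'
    obtain ⟨v, hv, rfl⟩ := mem_sBall_iff.mp hu
    obtain ⟨w, hw, rfl⟩ := mem_sBall_iff.mp hu'
    have hsv : s * v ∈ wordBall (Q : Set Γ) (R + 1) := by
      rw [add_comm]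
      exact mul_mem_wordBall (by simp [wordBall, hs]) hv
    rw [hφ hv, hφ hw, ← mul_smul, ← mul_smul]
    exact transfer hsv hw

lemma BallIso.exists_injOn_smul (h : BallIso Q H H' R x y) :
    ∃ φ : Γ ⧸ H → Γ ⧸ H', Set.InjOn φ (sBall Q H R x) ∧
      ∀ w ∈ wordBall (Q : Set Γ) R, φ (w • x) = w • y := by
  obtain ⟨φ, ⟨-, hinj, -⟩, hroot, hedge⟩ := h
  refine ⟨φ, hinj, fun w hw => ?_⟩
  suffices ∀ n ≤ R, ∀ w ∈ wordBall (Q : Set Γ) n, φ (w • x) = w • y from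
    this R le_rfl w hw
  intro n
  induction n with
  | zero =>
    intro _ w hw
    obtain rfl : w = 1 := by simpa [wordBall] using hw
    simpa using hroot
  | succ n ih =>
    intro hn w hw
    rw [wordBall, pow_succ'] at hw
    obtain ⟨t, ht, w, hw, rfl⟩ := hw
    change φ ((t * w) • x) = (t * w) • y
    have hwx := ih (by omega) w hw
    have hball : w • x ∈ sBall Q H R x := smul_mem_sBall (wordBall_mono (by omega) hw) x
    have htball : (t * w) • x ∈ sBall Q H R x := by
      refine smul_mem_sBall (wordBall_mono hn ?_) x
      rw [add_comm]
      exact mul_mem_wordBall (by rwa [wordBall, pow_one]) hw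
    simp only [Set.mem_insert_iff, Set.mem_union, Finset.mem_coe, Set.mem_inv] at ht
    rcases ht with rfl | ht | ht
    · simpa using hwx
    · rw [← (hedge t ht _ hball _ htball).mp (mul_smul t w x).symm, hwx, mul_smul]
    · have := (hedge t⁻¹ ht _ htball _ hball).mp (by rw [mul_smul, inv_smul_smul])
      rw [hwx, inv_smul_eq_iff] at this
      rw [this, mul_smul]

lemma agreeOn_of_ballIso (h : BallIso Q H H' R x y) :
    AgreeOn (wordBall (Q : Set Γ) R) (stabilizer Γ x) (stabilizer Γ y) := by
  obtain ⟨φ, hinj, hφ⟩ := h.exists_injOn_smul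
  have hroot : φ x = y := by simpa using hφ 1 one_mem_wordBall
  intro w hw
  rw [mem_stabilizer_iff, mem_stabilizer_iff]
  refine ⟨fun hwx => ?_, fun hwy => ?_⟩
  · rw [← hφ w hw, hwx, hroot]
  · have hx : x ∈ sBall Q H R x := by simpa using smul_mem_sBall one_mem_wordBall x
    exact hinj (smul_mem_sBall hw x) hx (by rw [hφ w hw, hwy, hroot])

end BallIso

section Chabauty

open Topology

variable {Γ : Type*} [Group Γ]

/-- The map `Sub(Γ) → {0,1}^Γ` inducing the topology `chabauty`. -/
noncomputable def chabautyMap (H : Subgroup Γ) : Γ → Bool :=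
  fun g => @decide (g ∈ H) (Classical.dec _)

lemma chabautyMap_eq_true {H : Subgroup Γ} {g : Γ} : chabautyMap H g = true ↔ g ∈ H := by
  simp [chabautyMap]

lemma chabautyMap_eq_chabautyMap_iff {K L : Subgroup Γ} {g : Γ} :
    chabautyMap K g = chabautyMap L g ↔ (g ∈ K ↔ g ∈ L) := by
  rw [Bool.eq_iff_iff, chabautyMap_eq_true, chabautyMap_eq_true]

lemma continuous_chabautyMap : Continuous (chabautyMap (Γ := Γ)) :=
  continuous_induced_dom

lemma range_chabautyMap : Set.range (chabautyMap (Γ := Γ)) =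
    ⋂ (a : Γ) (b : Γ),
      {f | f 1 = true ∧ (f a = true → f b = true → f (a * b⁻¹) = true)} := by
  ext f
  simp only [Set.mem_range, Set.mem_iInter, Set.mem_ofPred_eq]
  refine ⟨?_, fun hf => ?_⟩
  · rintro ⟨K, rfl⟩ a b
    simp only [chabautyMap_eq_true]
    exact ⟨K.one_mem, fun ha hb => K.mul_mem ha (K.inv_mem hb)⟩
  · refine ⟨.ofDiv {g | f g = true} ⟨1, (hf 1 1).1⟩ fun a ha b hb => (hf a b).2 ha hb, ?_⟩
    exact funext fun g => Bool.eq_iff_iff.mpr chabautyMap_eq_true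

lemma isClosedEmbedding_chabautyMap : IsClosedEmbedding (chabautyMap (Γ := Γ)) := by
  refine ⟨⟨⟨rfl⟩, fun K L h => Subgroup.ext fun g => ?_⟩, ?_⟩
  · rw [← chabautyMap_eq_true, h, chabautyMap_eq_true]
  rw [range_chabautyMap]
  refine isClosed_iInter fun a => isClosed_iInter fun b => ?_
  exact (isClosed_discrete {p : Bool × Bool × Bool × Bool |
      p.1 = true ∧ (p.2.1 = true → p.2.2.1 = true → p.2.2.2 = true)}).preimage
    (f := fun f : Γ → Bool => (f 1, f a, f b, f (a * b⁻¹))) (by fun_prop)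

instance : CompactSpace (Subgroup Γ) :=
  isClosedEmbedding_chabautyMap.compactSpace

lemma continuous_conjSub (g : Γ) : Continuous (conjSub g : Subgroup Γ → Subgroup Γ) := by
  refine continuous_induced_rng.mpr (continuous_pi fun w => ?_)
  have : (fun K => chabautyMap (conjSub g K) w) = fun K => chabautyMap K (g⁻¹ * w * g) :=
    funext fun K => by simp only [chabautyMap, decide_eq_decide, mem_conjSub]
  exact this ▸ (continuous_apply _).comp continuous_chabautyMap

lemma isOpen_setOf_agreeOn (L : Subgroup Γ) {W : Set Γ} (hW : W.Finite) :
    IsOpen {K | AgreeOn W K L} := by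
  have : {K | AgreeOn W K L} =
      ⋂ w ∈ W, (fun K => chabautyMap K w) ⁻¹' {chabautyMap L w} := by
    ext K
    simp only [Set.mem_iInter, Set.mem_preimage, Set.mem_singleton_iff,
      chabautyMap_eq_chabautyMap_iff]
    rfl
  rw [this]
  exact hW.isOpen_biInter fun w _ =>
    (isOpen_discrete _).preimage ((continuous_apply w).comp continuous_chabautyMap)

lemma mem_closure_iff_agreeOn {O : Set (Subgroup Γ)} {L : Subgroup Γ} :
    L ∈ closure O ↔ ∀ W : Set Γ, W.Finite → ∃ K ∈ O, AgreeOn W K L := by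
  refine ⟨fun h W hW => ?_, fun h => mem_closure_iff.mpr fun U hU hLU => ?_⟩
  · obtain ⟨K, hKU, hKO⟩ :=
      mem_closure_iff.mp h _ (isOpen_setOf_agreeOn L hW) fun _ _ => Iff.rfl
    exact ⟨K, hKO, hKU⟩
  · obtain ⟨V, hV, rfl⟩ := isOpen_induced_iff.mp hU
    obtain ⟨I, u, hu, hIu⟩ := isOpen_pi_iff.mp hV _ hLU
    obtain ⟨K, hKO, hK⟩ := h I I.finite_toSet
    refine ⟨K, hIu fun w hw => ?_, hKO⟩
    change chabautyMap K w ∈ u w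
    rw [chabautyMap_eq_chabautyMap_iff.mpr (hK w hw)]
    exact (hu w hw).2

end Chabauty

section URS

open MulAction

variable {Γ : Type*} [Group Γ] {Q : Finset Γ} {Z : Set (Subgroup Γ)} {H : Subgroup Γ}

lemma IsURS.stabilizer_mem (hZ : IsURS Z) (hH : H ∈ Z) (x : Γ ⧸ H) :
    stabilizer Γ x ∈ Z := by
  obtain ⟨g, hg⟩ : stabilizer Γ x ∈ conjOrbit H := by
    rw [conjOrbit_eq_range_stabilizer]
    exact ⟨x, rfl⟩
  exact hg ▸ hZ.invariant g H hH

lemma IsURS.exists_finset_conjSub_mem (hZ : IsURS Z) {U : Set (Subgroup Γ)} (hU : IsOpen U)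
    {N : Subgroup Γ} (hNZ : N ∈ Z) (hNU : N ∈ U) :
    ∃ F : Finset Γ, ∀ K ∈ Z, ∃ g ∈ F, conjSub g K ∈ U := by
  have hcover : Z ⊆ ⋃ g : Γ, conjSub g ⁻¹' U := fun K hK => by
    obtain ⟨_, hgU, g, rfl⟩ := mem_closure_iff.mp (hZ.minimal K hK N hNZ) U hU hNU
    exact Set.mem_iUnion.mpr ⟨g, hgU⟩
  obtain ⟨F, hF⟩ := hZ.closed.isCompact.elim_finite_subcover _
    (fun g => hU.preimage (continuous_conjSub g)) hcover
  exact ⟨F, fun K hK => by simpa using hF hK⟩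

theorem IsURS.repetitionProperty (hgen : Subgroup.closure (Q : Set Γ) = ⊤) (hZ : IsURS Z)
    (hH : H ∈ Z) : RepetitionProperty Q H := by
  intro x R _
  obtain ⟨F, hF⟩ := hZ.exists_finset_conjSub_mem
    (isOpen_setOf_agreeOn _ (finite_wordBall Q.finite_toSet (2 * R + 1)))
    (hZ.stabilizer_mem hH x) (fun _ _ => Iff.rfl)
  obtain ⟨S, hFS⟩ := exists_subset_wordBall hgen F.finite_toSet
  refine ⟨S + 1, S.succ_pos, fun y => ?_⟩
  obtain ⟨g, hgF, hg⟩ := hF _ (hZ.stabilizer_mem hH y)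
  refine ⟨g • y, smul_mem_sBall (wordBall_mono S.le_succ (hFS hgF)) y, ballIso_of_agreeOn ?_⟩
  rw [← stabilizer_smul_eq_conjSub] at hg
  exact hg.symm

lemma mem_closure_conjOrbit_iff {L : Subgroup Γ} :
    L ∈ closure (conjOrbit H) ↔ ∀ W : Set Γ, W.Finite → ∃ x : Γ ⧸ H,
      AgreeOn W (stabilizer Γ x) L := by
  simp [mem_closure_iff_agreeOn, conjOrbit_eq_range_stabilizer]

lemma conjSub_mem_closure_conjOrbit (g : Γ) {K : Subgroup Γ} (hK : K ∈ closure (conjOrbit H)) :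
    conjSub g K ∈ closure (conjOrbit H) := by
  refine Set.MapsTo.closure (fun _ hK => ?_) (continuous_conjSub g) hK
  rw [conjOrbit_eq_range_stabilizer] at hK ⊢
  obtain ⟨x, rfl⟩ := hK
  exact ⟨g • x, stabilizer_smul_eq_conjSub g x⟩

lemma RepetitionProperty.mem_closure_conjOrbit (hgen : Subgroup.closure (Q : Set Γ) = ⊤)
    (hrep : RepetitionProperty Q H) {K L : Subgroup Γ} (hK : K ∈ closure (conjOrbit H))
    (hL : L ∈ closure (conjOrbit H)) : L ∈ closure (conjOrbit K) := by
  refine mem_closure_iff_agreeOn.mpr fun W hW => ?_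
  obtain ⟨R, hWR⟩ := exists_subset_wordBall hgen hW
  obtain ⟨x, hx⟩ := mem_closure_conjOrbit_iff.mp hL _ (finite_wordBall Q.finite_toSet (R + 1))
  obtain ⟨S, -, hS⟩ := hrep x (R + 1) R.succ_pos
  obtain ⟨y, hy⟩ :=
    mem_closure_conjOrbit_iff.mp hK _ (finite_wordBall Q.finite_toSet (S + (R + 1) + S))
  obtain ⟨_, hz, hiso⟩ := hS y
  obtain ⟨v, hv, rfl⟩ := mem_sBall_iff.mp hz
  have hvK : AgreeOn (wordBall Q (R + 1)) (conjSub v K) (stabilizer Γ (v • y)) := by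
    rw [stabilizer_smul_eq_conjSub]
    exact (hy.conjSub v fun w hw => conj_mem_wordBall hv hw).symm
  refine ⟨conjSub v K, ⟨v, rfl⟩, ?_⟩
  exact ((hvK.trans (agreeOn_of_ballIso hiso).symm).trans hx).mono
    (hWR.trans (wordBall_mono R.le_succ))

theorem RepetitionProperty.isURS_closure_conjOrbit (hgen : Subgroup.closure (Q : Set Γ) = ⊤)
    (hrep : RepetitionProperty Q H) : IsURS (closure (conjOrbit H)) where
  nonempty := ⟨H, subset_closure ⟨1, by simpa using (stabilizer_coe_eq_conjSub H 1).symm⟩⟩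
  closed := isClosed_closure
  invariant g _ hK := conjSub_mem_closure_conjOrbit g hK
  minimal _ hK _ hL := hrep.mem_closure_conjOrbit hgen hK hL

end URS

theorem urs_iff_repetition_general
    {Γ : Type*} [Group Γ] (Q : Finset Γ)
    (hgen : Subgroup.closure (Q : Set Γ) = ⊤) :
    (∀ Z : Set (Subgroup Γ), IsURS Z → ∀ H ∈ Z, RepetitionProperty Q H) ∧
    (∀ H : Subgroup Γ, RepetitionProperty Q H →
      IsURS (closure {K : Subgroup Γ | ∃ g : Γ, conjSub g H = K})) :=
  ⟨fun _ hZ _ hH => hZ.repetitionProperty hgen hH,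
    fun _ hrep => hrep.isURS_closure_conjOrbit hgen⟩

/-- (a) every member of a URS has the repetition property; (b) conversely, if
a subgroup has the repetition property, then the closure of its conjugation orbit is a URS. -/
theorem urs_iff_repetition
    {Γ : Type*} [Group Γ] (Q : Finset Γ)
    (hgen : Subgroup.closure (Q : Set Γ) = ⊤)
    (hsym : ∀ s ∈ Q, s⁻¹ ∈ Q) :
    (∀ Z : Set (Subgroup Γ), IsURS Z → ∀ H ∈ Z, RepetitionProperty Q H) ∧
    (∀ H : Subgroup Γ, RepetitionProperty Q H →
      IsURS (closure {K : Subgroup Γ | ∃ g : Γ, conjSub g H = K})) :=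
  urs_iff_repetition_general Q hgen
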